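/- Let uv be an edge of a finite simple graph G and let H be the 3-subdivision of uv. Suppose that no edge of G is γ-critical, and that each of u and v belongs to some minimum dominating set of G. Then no edge of H is γ-critical; in particular the bondage number of H is at least 2. -/

import Mathlib

open SimpleGraph

/-- `S` is a dominating set of `G`. -/
def IsDomSet {V : Type*} (G : SimpleGraph V) (S : Finset V) : Prop :=
  ∀ v : V, v ∈ S ∨ ∃ u ∈ S, G.Adj u v

/-- The domination number `γ(G)`. -/
noncomputable def domNum {V : Type*} (G : SimpleGraph V) : ℕ :=
  sInf {n | ∃ S : Finset V, IsDomSet G S ∧ S.card = n}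

/-- `C` is a vertex cover of `G`. -/
def IsVC {V : Type*} (G : SimpleGraph V) (C : Finset V) : Prop :=
  ∀ e ∈ G.edgeSet, ∃ x ∈ C, x ∈ e

/-- The vertex cover number `τ(G)`. -/
noncomputable def tau {V : Type*} (G : SimpleGraph V) : ℕ :=
  sInf {n | ∃ C : Finset V, IsVC G C ∧ C.card = n}

/-- `S` is an independent set of `G`. -/
def IsIndep {V : Type*} (G : SimpleGraph V) (S : Finset V) : Prop :=
  ∀ a ∈ S, ∀ b ∈ S, ¬ G.Adj a b

/-- The independence number `α(G)`. -/
noncomputable def indepNum {V : Type*} (G : SimpleGraph V) : ℕ :=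
  sSup {n | ∃ S : Finset V, IsIndep G S ∧ S.card = n}

/-- The bondage number `b(G)`. -/
noncomputable def bondage {V : Type*} (G : SimpleGraph V) : ℕ :=
  sInf {n | ∃ E' : Finset (Sym2 V), ↑E' ⊆ G.edgeSet ∧ E'.card = n ∧
    domNum (G.deleteEdges ↑E') = domNum G + 1}

/-- The graph `G_v+u` obtained from `G` by adding one new vertex (`none`) adjacent only to `v`. -/
def addLeaf {V : Type*} (G : SimpleGraph V) (v : V) : SimpleGraph (Option V) :=
  SimpleGraph.fromRel (fun x y =>
    (∃ a b, x = some a ∧ y = some b ∧ G.Adj a b) ∨ (x = some v ∧ y = none))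

/-- The graph `G_A+` obtained from `G` by adding, for each `v ∈ A`, one new pendant
vertex adjacent only to `v`. -/
def addLeaves {V : Type*} (G : SimpleGraph V) (A : Finset V) :
    SimpleGraph (V ⊕ {x // x ∈ A}) :=
  SimpleGraph.fromRel (fun x y =>
    (∃ a b, x = Sum.inl a ∧ y = Sum.inl b ∧ G.Adj a b) ∨
    (∃ a : {x // x ∈ A}, x = Sum.inl a.1 ∧ y = Sum.inr a))

/-- The `3`-subdivision of the edge `uv` of `G`: the edge `uv` is deleted, three new
vertices `u' = Sum.inr 0`, `w = Sum.inr 1`, `v' = Sum.inr 2` are added, together with the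
four edges `u u'`, `u' w`, `w v'`, `v' v`. -/
def subdiv3 {V : Type*} (G : SimpleGraph V) (u v : V) : SimpleGraph (V ⊕ Fin 3) :=
  SimpleGraph.fromRel (fun x y =>
    match x, y with
    | Sum.inl a, Sum.inl b => G.Adj a b ∧ s(a, b) ≠ s(u, v)
    | Sum.inl a, Sum.inr i => (a = u ∧ i = 0) ∨ (a = v ∧ i = 2)
    | Sum.inr i, Sum.inr j => (i = 0 ∧ j = 1) ∨ (i = 1 ∧ j = 2)
    | _, _ => False)

/-!
Write `u – u' – w – v' – v` for the path replacing `uv` in the subdivision `H`. Projecting a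
dominating set of `H` back to `V` (with `u' ↦ u`, `v' ↦ v`) saves at least one vertex, so
`γ(H) ≥ γ(G) + 1`. Conversely, for every edge `e` of `H`, take a dominating set of size `γ(G)` of
`G`, `G - uv` or `G - e` (no edge of `G` is critical, so these all have domination number `γ(G)`),
containing `u` or `v` when that is needed, and add `v'` if it contains `u`, `u'` if it contains
`v`, and `w` otherwise: this dominates `H - e`, so `γ(H - e) ≤ γ(G) + 1 ≤ γ(H)`.
-/

open Finset Sum

section Domination

variable {V : Type*} {G : SimpleGraph V} {S : Finset V}

lemma domNum_le (h : IsDomSet G S) : domNum G ≤ S.card :=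
  Nat.sInf_le ⟨S, h, rfl⟩

lemma exists_isDomSet_card_eq_domNum [Fintype V] (G : SimpleGraph V) :
    ∃ S : Finset V, IsDomSet G S ∧ S.card = domNum G := by
  have hne : {n | ∃ S : Finset V, IsDomSet G S ∧ S.card = n}.Nonempty :=
    ⟨_, univ, fun v => .inl (mem_univ v), rfl⟩
  exact Nat.sInf_mem hne

lemma IsDomSet.deleteEdges_of_forall_notMem {e : Sym2 V} (hS : IsDomSet G S)
    (he : ∀ d ∈ S, d ∉ e) : IsDomSet (G.deleteEdges {e}) S := by
  intro z
  refine (hS z).imp_right fun ⟨d, hd, hdz⟩ => ⟨d, hd, ?_⟩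
  refine deleteEdges_adj.2 ⟨hdz, fun hde => he d hd ?_⟩
  exact (Set.mem_singleton_iff.1 hde) ▸ Sym2.mem_mk_left d z

lemma IsDomSet.deleteEdges_insert [DecidableEq V] {x y : V} (hS : IsDomSet G S) (hx : x ∈ S) :
    IsDomSet (G.deleteEdges {s(x, y)}) (insert y S) := by
  intro z
  rcases hS z with hz | ⟨d, hd, hdz⟩
  · exact .inl (mem_insert_of_mem hz)
  by_cases hdzxy : s(d, z) = s(x, y)
  · rcases Sym2.eq_iff.1 hdzxy with ⟨-, rfl⟩ | ⟨-, rfl⟩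
    · exact .inl (mem_insert_self z S)
    · exact .inl (mem_insert_of_mem hx)
  · exact .inr ⟨d, mem_insert_of_mem hd, deleteEdges_adj.2 ⟨hdz, hdzxy⟩⟩

lemma domNum_deleteEdges_singleton_le [Fintype V] [DecidableEq V] (G : SimpleGraph V)
    (e : Sym2 V) : domNum (G.deleteEdges {e}) ≤ domNum G + 1 := by
  obtain ⟨S, hS, hcard⟩ := exists_isDomSet_card_eq_domNum G
  induction e using Sym2.ind with
  | _ x y =>
  rw [← hcard]
  by_cases hx : x ∈ S
  · exact (domNum_le (hS.deleteEdges_insert hx)).trans (card_insert_le y S)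
  by_cases hy : y ∈ S
  · rw [Sym2.eq_swap]
    exact (domNum_le (hS.deleteEdges_insert hy)).trans (card_insert_le x S)
  · refine (domNum_le (hS.deleteEdges_of_forall_notMem fun d hd hde => ?_)).trans le_self_add
    rcases Sym2.mem_iff.1 hde with rfl | rfl
    exacts [hx hd, hy hd]

lemma domNum_lt_card_of_adj [Fintype V] [DecidableEq V] {a b : V} (hab : G.Adj a b) :
    domNum G < Fintype.card V := by
  have hdom : IsDomSet G (univ.erase a) := fun z => by
    by_cases hz : z = a
    · exact .inr ⟨b, mem_erase.2 ⟨hab.ne.symm, mem_univ b⟩, hz ▸ hab.symm⟩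
    · exact .inl (mem_erase.2 ⟨hz, mem_univ z⟩)
  exact (domNum_le hdom).trans_lt (card_erase_lt_of_mem (mem_univ a))

lemma IsDomSet.disjSum_singleton {W : Type*} {G' : SimpleGraph V} {K : SimpleGraph (V ⊕ W)}
    (hS : IsDomSet G' S) (t : W)
    (hV : ∀ c ∈ S, ∀ x, G'.Adj c x → x ∈ S ∨ K.Adj (inl c) (inl x) ∨ K.Adj (inr t) (inl x))
    (hW : ∀ i, i ≠ t → K.Adj (inr t) (inr i) ∨ ∃ d ∈ S, K.Adj (inl d) (inr i)) :
    IsDomSet K (S.disjSum {t}) := by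
  have ht : inr t ∈ S.disjSum {t} := inr_mem_disjSum.2 (mem_singleton_self t)
  rintro (x | i)
  · rcases hS x with hx | ⟨c, hc, hcx⟩
    · exact .inl (inl_mem_disjSum.2 hx)
    rcases hV c hc x hcx with hx | hK | hK
    · exact .inl (inl_mem_disjSum.2 hx)
    · exact .inr ⟨inl c, inl_mem_disjSum.2 hc, hK⟩
    · exact .inr ⟨inr t, ht, hK⟩
  · by_cases hi : i = t
    · exact .inl (hi ▸ ht)
    rcases hW i hi with hK | ⟨d, hd, hK⟩
    · exact .inr ⟨inr t, ht, hK⟩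
    · exact .inr ⟨inl d, inl_mem_disjSum.2 hd, hK⟩

lemma domNum_bot [Fintype V] : domNum (⊥ : SimpleGraph V) = Fintype.card V := by
  obtain ⟨S, hS, hcard⟩ := exists_isDomSet_card_eq_domNum (⊥ : SimpleGraph V)
  have : S = univ := eq_univ_of_forall fun z => by simpa using hS z
  rw [← hcard, this, card_univ]

end Domination

section Bondage

variable {V : Type*} [Fintype V] [DecidableEq V] (G : SimpleGraph V)

/-- Deleting one edge raises `γ` by at most one, so as edges of `E'` are deleted one at a time
the value `γ(G) + 1` cannot be skipped. -/
lemma exists_subset_domNum_deleteEdges_eq_succ (E' : Finset (Sym2 V))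
    (hE' : domNum G + 1 ≤ domNum (G.deleteEdges E')) :
    ∃ E'' ⊆ E', domNum (G.deleteEdges E'') = domNum G + 1 := by
  induction E' using Finset.induction_on with
  | empty => simp at hE'
  | insert e E' _ ih =>
    by_cases hE : domNum G + 1 ≤ domNum (G.deleteEdges E')
    · obtain ⟨E'', hsub, hE''⟩ := ih hE
      exact ⟨E'', hsub.trans (subset_insert e E'), hE''⟩
    · refine ⟨insert e E', subset_rfl, le_antisymm ?_ hE'⟩
      have hsplit : G.deleteEdges ↑(insert e E') = (G.deleteEdges E').deleteEdges {e} := by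
        rw [deleteEdges_deleteEdges, coe_insert, Set.insert_eq, Set.union_comm]
      rw [hsplit]
      have := domNum_deleteEdges_singleton_le (G.deleteEdges E') e
      omega

lemma two_le_bondage (hlt : domNum G < Fintype.card V)
    (hG : ∀ e ∈ G.edgeSet, domNum (G.deleteEdges {e}) ≠ domNum G + 1) :
    2 ≤ bondage G := by
  classical
  obtain ⟨E', hsub, hE'⟩ := exists_subset_domNum_deleteEdges_eq_succ G G.edgeFinset
    (by rw [coe_edgeFinset, deleteEdges_edgeSet, sdiff_self, domNum_bot]; omega)
  refine le_csInf ⟨_, E', by simpa using coe_subset.2 hsub, rfl, hE'⟩ ?_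
  rintro _ ⟨E, hsub, rfl, hE⟩
  by_contra! hlt2
  interval_cases h : E.card
  · simp [card_eq_zero.1 h] at hE
  · obtain ⟨e, rfl⟩ := card_eq_one.1 h
    exact hG e (hsub (mem_singleton_self e)) (by simpa using hE)

end Bondage

section Subdivision

variable {V : Type*} {G : SimpleGraph V} {u v : V}

@[simp]
lemma subdiv3_adj_inl_inl {a b : V} :
    (subdiv3 G u v).Adj (inl a) (inl b) ↔ G.Adj a b ∧ s(a, b) ≠ s(u, v) := by
  simp only [subdiv3, fromRel_adj, ne_eq, inl.injEq]
  grind [G.adj_symm, Sym2.eq_swap, G.ne_of_adj]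

@[simp]
lemma subdiv3_adj_inl_inr {a : V} {i : Fin 3} :
    (subdiv3 G u v).Adj (inl a) (inr i) ↔ a = u ∧ i = 0 ∨ a = v ∧ i = 2 := by
  simp [subdiv3]

@[simp]
lemma subdiv3_adj_inr_inl {a : V} {i : Fin 3} :
    (subdiv3 G u v).Adj (inr i) (inl a) ↔ a = u ∧ i = 0 ∨ a = v ∧ i = 2 := by
  simp [subdiv3]

@[simp]
lemma subdiv3_adj_inr_inr {i j : Fin 3} :
    (subdiv3 G u v).Adj (inr i) (inr j) ↔
      i = 0 ∧ j = 1 ∨ i = 1 ∧ j = 2 ∨ i = 1 ∧ j = 0 ∨ i = 2 ∧ j = 1 := by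
  simp only [subdiv3, fromRel_adj, ne_eq, inr.injEq]
  revert i j
  decide

lemma subdiv3_edgeSet_cases {e : Sym2 (V ⊕ Fin 3)} (he : e ∈ (subdiv3 G u v).edgeSet) :
    (∃ a b, G.Adj a b ∧ s(a, b) ≠ s(u, v) ∧ e = s(inl a, inl b)) ∨
      e = s(inl u, inr 0) ∨ e = s(inr 0, inr 1) ∨ e = s(inr 1, inr 2) ∨ e = s(inl v, inr 2) := by
  induction e using Sym2.ind with
  | _ x y =>
  rcases x with a | i <;> rcases y with b | j
  · exact .inl ⟨a, b, subdiv3_adj_inl_inl.1 he |>.1, subdiv3_adj_inl_inl.1 he |>.2, rfl⟩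
  all_goals
    simp only [mem_edgeSet, subdiv3_adj_inl_inr, subdiv3_adj_inr_inl, subdiv3_adj_inr_inr] at he
    rcases he with ⟨rfl, rfl⟩ | ⟨rfl, rfl⟩ | ⟨rfl, rfl⟩ | ⟨rfl, rfl⟩ <;> simp_all [Sym2.eq_swap]

variable {G' : SimpleGraph V} {S : Finset V} {e : Sym2 (V ⊕ Fin 3)}

lemma subdiv3_deleteEdges_adj_inl_inl (hG' : G' ≤ G)
    (hinl : ∀ c x, G'.Adj c x → s(inl c, inl x) ≠ e) {c x : V} (hcx : G'.Adj c x)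
    (hcxuv : s(c, x) ≠ s(u, v)) : ((subdiv3 G u v).deleteEdges {e}).Adj (inl c) (inl x) :=
  deleteEdges_adj.2 ⟨subdiv3_adj_inl_inl.2 ⟨hG' hcx, hcxuv⟩, hinl c x hcx⟩

lemma domNum_subdiv3_deleteEdges_le_of_left_mem (hS : IsDomSet G' S) (hG' : G' ≤ G)
    (hinl : ∀ c x, G'.Adj c x → s(inl c, inl x) ≠ e) (huS : u ∈ S)
    (h0 : s(inl u, inr 0) ≠ e) (h12 : s(inr 1, inr 2) ≠ e) (h2 : s(inl v, inr 2) ≠ e) :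
    domNum ((subdiv3 G u v).deleteEdges {e}) ≤ S.card + 1 := by
  refine (domNum_le (hS.disjSum_singleton 2 (fun c hc x hcx => ?_) fun i hi => ?_)).trans
    (by simp)
  · by_cases hcxuv : s(c, x) = s(u, v)
    · rcases Sym2.eq_iff.1 hcxuv with ⟨-, rfl⟩ | ⟨-, rfl⟩
      · simp_all [Sym2.eq_swap]
      · exact .inl huS
    · exact .inr (.inl (subdiv3_deleteEdges_adj_inl_inl hG' hinl hcx hcxuv))
  · fin_cases i <;> simp_all [Sym2.eq_swap]

lemma domNum_subdiv3_deleteEdges_le_of_right_mem (hS : IsDomSet G' S) (hG' : G' ≤ G)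
    (hinl : ∀ c x, G'.Adj c x → s(inl c, inl x) ≠ e) (hvS : v ∈ S)
    (h0 : s(inl u, inr 0) ≠ e) (h01 : s(inr 0, inr 1) ≠ e) (h2 : s(inl v, inr 2) ≠ e) :
    domNum ((subdiv3 G u v).deleteEdges {e}) ≤ S.card + 1 := by
  refine (domNum_le (hS.disjSum_singleton 0 (fun c hc x hcx => ?_) fun i hi => ?_)).trans
    (by simp)
  · by_cases hcxuv : s(c, x) = s(u, v)
    · rcases Sym2.eq_iff.1 hcxuv with ⟨-, rfl⟩ | ⟨-, rfl⟩
      · exact .inl hvS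
      · simp_all [Sym2.eq_swap]
    · exact .inr (.inl (subdiv3_deleteEdges_adj_inl_inl hG' hinl hcx hcxuv))
  · fin_cases i <;> simp_all

lemma domNum_subdiv3_deleteEdges_le_of_le_deleteEdges (hS : IsDomSet G' S)
    (hG' : G' ≤ G.deleteEdges {s(u, v)}) (hinl : ∀ c x, G'.Adj c x → s(inl c, inl x) ≠ e)
    (h01 : s(inr 0, inr 1) ≠ e) (h12 : s(inr 1, inr 2) ≠ e) :
    domNum ((subdiv3 G u v).deleteEdges {e}) ≤ S.card + 1 := by
  refine (domNum_le (hS.disjSum_singleton 1 (fun c _ x hcx => ?_) fun i hi => ?_)).trans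
    (by simp)
  · have hcx' := deleteEdges_adj.1 (hG' hcx)
    exact .inr (.inl (subdiv3_deleteEdges_adj_inl_inl (hG'.trans (deleteEdges_le _)) hinl hcx
      (by simpa using hcx'.2)))
  · fin_cases i <;> simp_all [Sym2.eq_swap]

lemma domNum_subdiv3_deleteEdges_inl_le {a b : V}
    (hS : IsDomSet (G.deleteEdges {s(a, b)}) S) :
    domNum ((subdiv3 G u v).deleteEdges {s(inl a, inl b)}) ≤ S.card + 1 := by
  have hinl : ∀ c x, (G.deleteEdges {s(a, b)}).Adj c x →
      s((inl c : V ⊕ Fin 3), inl x) ≠ s(inl a, inl b) :=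
    fun c x hcx => by simpa using (deleteEdges_adj.1 hcx).2
  by_cases huS : u ∈ S
  · exact domNum_subdiv3_deleteEdges_le_of_left_mem hS (deleteEdges_le _) hinl huS
      (by simp) (by simp) (by simp)
  by_cases hvS : v ∈ S
  · exact domNum_subdiv3_deleteEdges_le_of_right_mem hS (deleteEdges_le _) hinl hvS
      (by simp) (by simp) (by simp)
  · have hS' : IsDomSet ((G.deleteEdges {s(a, b)}).deleteEdges {s(u, v)}) S :=
      hS.deleteEdges_of_forall_notMem fun d hd hduv => by
        rcases Sym2.mem_iff.1 hduv with rfl | rfl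
        exacts [huS hd, hvS hd]
    exact domNum_subdiv3_deleteEdges_le_of_le_deleteEdges hS'
      (deleteEdges_mono (deleteEdges_le _)) (fun c x hcx => hinl c x (deleteEdges_le _ hcx))
      (by simp) (by simp)

lemma domNum_subdiv3_deleteEdges_le [Fintype V] (huv : G.Adj u v)
    (hG : ∀ f ∈ G.edgeSet, domNum (G.deleteEdges {f}) ≤ domNum G)
    (hu : ∃ S : Finset V, IsDomSet G S ∧ S.card = domNum G ∧ u ∈ S)
    (hv : ∃ S : Finset V, IsDomSet G S ∧ S.card = domNum G ∧ v ∈ S)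
    (he : e ∈ (subdiv3 G u v).edgeSet) :
    domNum ((subdiv3 G u v).deleteEdges {e}) ≤ domNum G + 1 := by
  obtain ⟨Su, hSu, hSu_card, huSu⟩ := hu
  obtain ⟨Sv, hSv, hSv_card, hvSv⟩ := hv
  obtain ⟨Suv, hSuv, hSuv_card⟩ := exists_isDomSet_card_eq_domNum (G.deleteEdges {s(u, v)})
  have hSuv_le : Suv.card ≤ domNum G := hSuv_card ▸ hG _ huv
  rcases subdiv3_edgeSet_cases he with ⟨a, b, hab, -, rfl⟩ | rfl | rfl | rfl | rfl
  · obtain ⟨S, hS, hS_card⟩ := exists_isDomSet_card_eq_domNum (G.deleteEdges {s(a, b)})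
    have hS_le : S.card ≤ domNum G := hS_card ▸ hG _ hab
    exact (domNum_subdiv3_deleteEdges_inl_le hS).trans (by omega)
  · exact (domNum_subdiv3_deleteEdges_le_of_le_deleteEdges hSuv le_rfl (by simp) (by simp)
      (by simp)).trans (by omega)
  · exact (domNum_subdiv3_deleteEdges_le_of_left_mem hSu le_rfl (by simp) huSu (by simp)
      (by simp) (by simp)).trans (by omega)
  · exact (domNum_subdiv3_deleteEdges_le_of_right_mem hSv le_rfl (by simp) hvSv (by simp)
      (by simp) (by simp)).trans (by omega)
  · exact (domNum_subdiv3_deleteEdges_le_of_le_deleteEdges hSuv le_rfl (by simp) (by simp)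
      (by simp)).trans (by omega)

lemma IsDomSet.of_subdiv3 {D : Finset (V ⊕ Fin 3)} {T : Finset V}
    (hD : IsDomSet (subdiv3 G u v) D) (huv : G.Adj u v) (hT : D.toLeft ⊆ T)
    (huvT : inr 0 ∈ D ∨ inr 2 ∈ D → u ∈ T ∨ v ∈ T) : IsDomSet G T := by
  intro x
  rcases hD (inl x) with hx | ⟨d | i, hd, hdx⟩
  · exact .inl (hT (mem_toLeft.2 hx))
  · exact .inr ⟨d, hT (mem_toLeft.2 hd), (subdiv3_adj_inl_inl.1 hdx).1⟩
  · rcases subdiv3_adj_inr_inl.1 hdx with ⟨rfl, rfl⟩ | ⟨rfl, rfl⟩ <;>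
      rcases huvT (by simp [hd]) with h | h
    exacts [.inl h, .inr ⟨v, h, huv.symm⟩, .inr ⟨u, h, huv⟩, .inl h]

lemma domNum_add_one_le_domNum_subdiv3 [Fintype V] [DecidableEq V] (huv : G.Adj u v) :
    domNum G + 1 ≤ domNum (subdiv3 G u v) := by
  obtain ⟨D, hD, hD_card⟩ := exists_isDomSet_card_eq_domNum (subdiv3 G u v)
  rw [← hD_card, ← card_toLeft_add_card_toRight]
  have hw : 0 ∈ D.toRight ∨ 1 ∈ D.toRight ∨ 2 ∈ D.toRight := by
    rcases hD (inr 1) with h | ⟨d | i, hd, hdw⟩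
    · simp [h]
    · simp at hdw
    · fin_cases i <;> simp_all
  -- Unless `D` meets `{u, v}` or meets the path only in `w`, it contains two path vertices, and
  -- then there is room to add `u`.
  by_cases hleft : (u ∈ D.toLeft ∨ v ∈ D.toLeft) ∨ (inr 0 ∉ D ∧ inr 2 ∉ D)
  · have hR : 0 < D.toRight.card := card_pos.2 (by rcases hw with h | h | h <;> exact ⟨_, h⟩)
    have := domNum_le (hD.of_subdiv3 huv subset_rfl (by simp only [mem_toLeft] at hleft ⊢; tauto))
    omega
  · simp only [not_or, not_and_or, not_not] at hleft
    obtain ⟨⟨huD, hvD⟩, h02⟩ := hleft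
    have hu' : 0 ∈ D.toRight ∨ 1 ∈ D.toRight := by
      rcases hD (inr 0) with h | ⟨d | i, hd, hdu'⟩
      · simp [h]
      · simp_all
      · fin_cases i <;> simp_all
    have hv' : 1 ∈ D.toRight ∨ 2 ∈ D.toRight := by
      rcases hD (inr 2) with h | ⟨d | i, hd, hdv'⟩
      · simp [h]
      · simp_all
      · fin_cases i <;> simp_all
    have hR : 2 ≤ D.toRight.card := by
      have key : ∀ R : Finset (Fin 3), (0 ∈ R ∨ 1 ∈ R) → (1 ∈ R ∨ 2 ∈ R) → (0 ∈ R ∨ 2 ∈ R) →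
          2 ≤ R.card := by decide
      exact key _ hu' hv' (by simpa using h02)
    have := domNum_le (hD.of_subdiv3 huv (subset_insert u _) fun _ => .inl (mem_insert_self u _))
    have := card_insert_le u D.toLeft
    omega

end Subdivision

/-- If no edge of `G` is `γ`-critical and each of `u`, `v` belongs to some minimum
dominating set of `G`, then no edge of the `3`-subdivision `H` of the edge `uv` is
`γ`-critical; in particular `b(H) ≥ 2`. -/
theorem stmt8 {V : Type*} [Fintype V] [DecidableEq V] (G : SimpleGraph V)
    (u v : V) (huv : G.Adj u v)
    (hG : ∀ e ∈ G.edgeSet, domNum (G.deleteEdges {e}) ≠ domNum G + 1)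
    (hu : ∃ S : Finset V, IsDomSet G S ∧ S.card = domNum G ∧ u ∈ S)
    (hv : ∃ S : Finset V, IsDomSet G S ∧ S.card = domNum G ∧ v ∈ S) :
    (∀ e ∈ (subdiv3 G u v).edgeSet,
        domNum ((subdiv3 G u v).deleteEdges {e}) ≠ domNum (subdiv3 G u v) + 1) ∧
    2 ≤ bondage (subdiv3 G u v) := by
  have hG_le : ∀ f ∈ G.edgeSet, domNum (G.deleteEdges {f}) ≤ domNum G := fun f hf =>
    Nat.le_of_lt_succ ((domNum_deleteEdges_singleton_le G f).lt_of_ne (hG f hf))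
  have hlower := domNum_add_one_le_domNum_subdiv3 huv
  have hnot_critical : ∀ e ∈ (subdiv3 G u v).edgeSet,
      domNum ((subdiv3 G u v).deleteEdges {e}) ≠ domNum (subdiv3 G u v) + 1 := fun e he => by
    have := domNum_subdiv3_deleteEdges_le huv hG_le hu hv he
    omega
  have hlt : domNum (subdiv3 G u v) < Fintype.card (V ⊕ Fin 3) :=
    domNum_lt_card_of_adj (a := inl u) (b := inr 0) (by simp)
  exact ⟨hnot_critical, two_le_bondage _ hlt hnot_critical⟩
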